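/- arXiv:math/0609722 — 2 statements merged into one kernel-verified Lean document; each statement's English description precedes it below -/
import Mathlib

section
/- Suppose smooth functions f, g : D → ℂ on an open set D ⊆ ℂ satisfy ∂f/∂z̄ = (1/2)|f|²g(μ₁(1−ḡ²) − μ₂(1+ḡ²)) and ∂g/∂z̄ = −(1/4)(μ₁(1+g²)(1−ḡ²) + μ₂(1−g²)(1+ḡ²))·f̄, with f nonvanishing. Then g satisfies the second-order equation g_{zz̄} − [2g(μ₁(1−ḡ²) − μ₂(1+ḡ²))/(μ₁(1+g²)(1−ḡ²) + μ₂(1−g²)(1+ḡ²))]·g_z g_{z̄} + [4ḡ(1−g⁴)(μ₁²−μ₂²)|g_{z̄}|²]/[(μ₁²+μ₂²)|1−g⁴|² + μ₁μ₂((1+g²)²(1−ḡ²)² + (1+ḡ²)²(1−g²)²)] = 0, wherever the displayed denominators are nonzero. -/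
open Complex ComplexConjugate

/-- The Wirtinger derivative ∂/∂z = (1/2)(∂/∂x − i∂/∂y). -/
noncomputable def wDz (F : ℂ → ℂ) (z : ℂ) : ℂ :=
  (fderiv ℝ F z 1 - Complex.I * fderiv ℝ F z Complex.I) / 2

/-- The Wirtinger derivative ∂/∂z̄ = (1/2)(∂/∂x + i∂/∂y). -/
noncomputable def wDzbar (F : ℂ → ℂ) (z : ℂ) : ℂ :=
  (fderiv ℝ F z 1 + Complex.I * fderiv ℝ F z Complex.I) / 2

lemma wderiv_eval (g f : ℂ → ℂ) (z : ℂ) (μ₁ μ₂ : ℝ)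
    (hgd : DifferentiableAt ℝ g z) (hfd : DifferentiableAt ℝ f z) (v : ℂ) :
    fderiv ℝ (fun w => -(1/4) * ((μ₁:ℂ) * ((1 + g w * g w) * (1 - conj (g w) * conj (g w)))
        + (μ₂:ℂ) * ((1 - g w * g w) * (1 + conj (g w) * conj (g w)))) * conj (f w)) z v =
      -(1/4) * ((μ₁:ℂ) * ((2 * g z) * (1 - conj (g z)^2)) - (μ₂:ℂ) * ((2 * g z) * (1 + conj (g z)^2))) * conj (f z) * (fderiv ℝ g z v)
      + -(1/4) * (-(μ₁:ℂ) * ((2 * conj (g z)) * (1 + g z^2)) + (μ₂:ℂ) * ((2 * conj (g z)) * (1 - g z^2))) * conj (f z) * conj (fderiv ℝ g z v)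
      + -(1/4) * ((μ₁:ℂ) * (1 + g z^2) * (1 - conj (g z)^2) + (μ₂:ℂ) * (1 - g z^2) * (1 + conj (g z)^2)) * conj (fderiv ℝ f z v) := by
  have hg' := hgd.hasFDerivAt
  have hf' := hfd.hasFDerivAt
  have hcg : HasFDerivAt (fun w => conj (g w))
      ((Complex.conjCLE : ℂ →L[ℝ] ℂ).comp (fderiv ℝ g z)) z :=
    (Complex.conjCLE.hasFDerivAt.comp z hg' :)
  have hcf : HasFDerivAt (fun w => conj (f w))
      ((Complex.conjCLE : ℂ →L[ℝ] ℂ).comp (fderiv ℝ f z)) z :=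
    (Complex.conjCLE.hasFDerivAt.comp z hf' :)
  have hH := (((((((hg'.mul hg').const_add 1).mul ((hcg.mul hcg).const_sub 1)).const_mul
      (μ₁:ℂ)).add ((((hg'.mul hg').const_sub 1).mul ((hcg.mul hcg).const_add 1)).const_mul
      (μ₂:ℂ))).const_mul (-(1/4):ℂ)).mul hcf)
  erw [hH.fderiv]
  simp only [ContinuousLinearMap.add_apply, ContinuousLinearMap.smul_apply,
    ContinuousLinearMap.comp_apply, ContinuousLinearMap.neg_apply, smul_eq_mul, Pi.mul_apply, Pi.add_apply,
    Complex.conjCLE_apply, ContinuousLinearEquiv.coe_coe]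
  ring

lemma absq (w : ℂ) : ((‖w‖ : ℝ) : ℂ) ^ 2 = w * conj w := by
  rw [← Complex.ofReal_pow, Complex.sq_norm, Complex.mul_conj]

theorem stmt11 (μ₁ μ₂ : ℝ) (D : Set ℂ) (hD : IsOpen D) (f g : ℂ → ℂ)
    (hf : ContDiffOn ℝ (⊤ : ℕ∞) f D) (hg : ContDiffOn ℝ (⊤ : ℕ∞) g D)
    (hfne : ∀ z ∈ D, f z ≠ 0)
    (heqf : ∀ z ∈ D, wDzbar f z =
      (1 / 2) * (‖f z‖ : ℂ) ^ 2 * g z *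
        ((μ₁ : ℂ) * (1 - (conj (g z)) ^ 2) - (μ₂ : ℂ) * (1 + (conj (g z)) ^ 2)))
    (heqg : ∀ z ∈ D, wDzbar g z =
      -(1 / 4) * ((μ₁ : ℂ) * (1 + g z ^ 2) * (1 - (conj (g z)) ^ 2)
          + (μ₂ : ℂ) * (1 - g z ^ 2) * (1 + (conj (g z)) ^ 2)) * conj (f z)) :
    ∀ z ∈ D,
      (μ₁ : ℂ) * (1 + g z ^ 2) * (1 - (conj (g z)) ^ 2)
        + (μ₂ : ℂ) * (1 - g z ^ 2) * (1 + (conj (g z)) ^ 2) ≠ 0 →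
      ((μ₁ : ℂ) ^ 2 + (μ₂ : ℂ) ^ 2) * (‖1 - g z ^ 4‖ : ℂ) ^ 2
        + (μ₁ : ℂ) * (μ₂ : ℂ) *
          ((1 + g z ^ 2) ^ 2 * (1 - (conj (g z)) ^ 2) ^ 2
            + (1 + (conj (g z)) ^ 2) ^ 2 * (1 - g z ^ 2) ^ 2) ≠ 0 →
      wDz (wDzbar g) z
        - (2 * g z * ((μ₁ : ℂ) * (1 - (conj (g z)) ^ 2) - (μ₂ : ℂ) * (1 + (conj (g z)) ^ 2))
            / ((μ₁ : ℂ) * (1 + g z ^ 2) * (1 - (conj (g z)) ^ 2)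
                + (μ₂ : ℂ) * (1 - g z ^ 2) * (1 + (conj (g z)) ^ 2)))
          * wDz g z * wDzbar g z
        + 4 * conj (g z) * (1 - g z ^ 4) * ((μ₁ : ℂ) ^ 2 - (μ₂ : ℂ) ^ 2)
            * (‖wDzbar g z‖ : ℂ) ^ 2
          / (((μ₁ : ℂ) ^ 2 + (μ₂ : ℂ) ^ 2) * (‖1 - g z ^ 4‖ : ℂ) ^ 2
              + (μ₁ : ℂ) * (μ₂ : ℂ) *
                ((1 + g z ^ 2) ^ 2 * (1 - (conj (g z)) ^ 2) ^ 2
                  + (1 + (conj (g z)) ^ 2) ^ 2 * (1 - g z ^ 2) ^ 2)) = 0 := by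
  intro z hz hQ0 hDen0
  have hgd : DifferentiableAt ℝ g z := (hg.contDiffAt (hD.mem_nhds hz)).differentiableAt (by simp)
  have hfd : DifferentiableAt ℝ f z := (hf.contDiffAt (hD.mem_nhds hz)).differentiableAt (by simp)
  have hev : wDzbar g =ᶠ[nhds z] (fun w => -(1/4) * ((μ₁:ℂ) * ((1 + g w * g w) * (1 - conj (g w) * conj (g w)))
        + (μ₂:ℂ) * ((1 - g w * g w) * (1 + conj (g w) * conj (g w)))) * conj (f w)) := by
    filter_upwards [hD.mem_nhds hz] with w hw
    rw [heqg w hw]; ring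
  have hfe : fderiv ℝ (wDzbar g) z = fderiv ℝ (fun w => -(1/4) * ((μ₁:ℂ) * ((1 + g w * g w) * (1 - conj (g w) * conj (g w)))
        + (μ₂:ℂ) * ((1 - g w * g w) * (1 + conj (g w) * conj (g w)))) * conj (f w)) z :=
    hev.fderiv_eq
  have hmain : wDz (wDzbar g) z =
      (-(1/4) * ((μ₁:ℂ) * ((2 * g z) * (1 - conj (g z)^2)) - (μ₂:ℂ) * ((2 * g z) * (1 + conj (g z)^2))) * conj (f z)) * wDz g z
      + (-(1/4) * (-(μ₁:ℂ) * ((2 * conj (g z)) * (1 + g z^2)) + (μ₂:ℂ) * ((2 * conj (g z)) * (1 - g z^2))) * conj (f z)) * conj (wDzbar g z)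
      + (-(1/4) * ((μ₁:ℂ) * (1 + g z^2) * (1 - conj (g z)^2) + (μ₂:ℂ) * (1 - g z^2) * (1 + conj (g z)^2))) * conj (wDzbar f z) := by
    rw [wDz, hfe, wderiv_eval g f z μ₁ μ₂ hgd hfd 1, wderiv_eval g f z μ₁ μ₂ hgd hfd Complex.I]
    rw [wDz, wDzbar, wDzbar]
    simp only [map_add, map_mul, map_div₀, Complex.conj_I, map_one, map_ofNat]
    ring
  have hDen2 : ((μ₁ : ℂ) ^ 2 + (μ₂ : ℂ) ^ 2) * ((1 - g z ^ 4) * (1 - conj (g z) ^ 4))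
        + (μ₁ : ℂ) * (μ₂ : ℂ) *
          ((1 + g z ^ 2) ^ 2 * (1 - (conj (g z)) ^ 2) ^ 2
            + (1 + (conj (g z)) ^ 2) ^ 2 * (1 - g z ^ 2) ^ 2) ≠ 0 := by
    intro h; apply hDen0
    rw [absq (1 - g z ^ 4)]
    simpa using h
  rw [absq (wDzbar g z), absq (1 - g z ^ 4), hmain, heqg z hz, heqf z hz]
  simp only [map_add, map_sub, map_mul, map_neg, map_pow, map_one, map_div₀, map_ofNat,
    Complex.conj_conj, Complex.conj_ofReal]
  rw [absq (f z)]
  rw [div_mul_eq_mul_div (2 * g z * _) _ (wDz g z), div_mul_eq_mul_div _ _ (-(1/4) * _ * conj (f z)),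
    sub_div' hQ0, div_add_div _ _ hQ0 hDen2, div_eq_zero_iff]
  left
  ring
end

section
/- If g : D → ℂ is smooth with g² − ḡ² nonvanishing and satisfies g_{zz̄} − (2g/(g²−ḡ²))g_z g_{z̄} = 0, then, defining f = 2ḡ_z/(g² − ḡ²) (where ḡ_z = ∂(conj g)/∂z = conj(g_{z̄})), the pair (f,g) satisfies the system ∂f/∂z̄ = (1/2)|f|²g((1−ḡ²) + (1+ḡ²)) = |f|²g and ∂g/∂z̄ = −(1/4)((1+g²)(1−ḡ²) − (1−g²)(1+ḡ²))f̄ = −(1/2)(g²−ḡ²)f̄, which is the system (f-eq)–(g-eq) for μ₁ = 1, μ₂ = −1. -/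
open Complex ComplexConjugate

lemma wDzbar_const_mul' {F : ℂ → ℂ} {z : ℂ} (c : ℂ) (hF : DifferentiableAt ℝ F z) :
    wDzbar (fun w => c * F w) z = c * wDzbar F z := by
  simp only [wDzbar, fderiv_const_mul hF c, ContinuousLinearMap.smul_apply, smul_eq_mul]
  ring

lemma wDzbar_mul' {F G : ℂ → ℂ} {z : ℂ} (hF : DifferentiableAt ℝ F z)
    (hG : DifferentiableAt ℝ G z) :
    wDzbar (fun w => F w * G w) z = F z * wDzbar G z + G z * wDzbar F z := by
  simp only [wDzbar, fderiv_fun_mul hF hG, ContinuousLinearMap.add_apply,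
    ContinuousLinearMap.smul_apply, smul_eq_mul]
  ring

lemma wDzbar_sub' {F G : ℂ → ℂ} {z : ℂ} (hF : DifferentiableAt ℝ F z)
    (hG : DifferentiableAt ℝ G z) :
    wDzbar (fun w => F w - G w) z = wDzbar F z - wDzbar G z := by
  simp only [wDzbar, fderiv_fun_sub hF hG, ContinuousLinearMap.sub_apply]
  ring

lemma fderiv_conj_comp' {F : ℂ → ℂ} {z : ℂ} (hF : DifferentiableAt ℝ F z) (v : ℂ) :
    fderiv ℝ (fun w => conj (F w)) z v = conj (fderiv ℝ F z v) := by
  have h := (Complex.conjCLE.toContinuousLinearMap.hasFDerivAt.comp z hF.hasFDerivAt).fderiv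
  have he : (fun w => conj (F w)) = (⇑Complex.conjCLE.toContinuousLinearMap ∘ F) := by
    funext w; simp
  rw [he, h]; simp

lemma differentiableAt_conj_comp' {F : ℂ → ℂ} {z : ℂ} (hF : DifferentiableAt ℝ F z) :
    DifferentiableAt ℝ (fun w => conj (F w)) z := by
  have he : (fun w => conj (F w)) = (⇑Complex.conjCLE.toContinuousLinearMap ∘ F) := by
    funext w; simp
  rw [he]
  exact Complex.conjCLE.toContinuousLinearMap.differentiableAt.comp z hF

lemma wDzbar_conj' {F : ℂ → ℂ} {z : ℂ} (hF : DifferentiableAt ℝ F z) :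
    wDzbar (fun w => conj (F w)) z = conj (wDz F z) := by
  simp only [wDzbar, wDz, fderiv_conj_comp' hF, map_div₀, map_sub, map_mul, Complex.conj_I,
    map_ofNat]
  ring

lemma wDzbar_inv' {d : ℂ → ℂ} {z : ℂ} (hd : DifferentiableAt ℝ d z) (h0 : d z ≠ 0) :
    wDzbar (fun w => (d w)⁻¹) z = -(wDzbar d z) / (d z) ^ 2 := by
  have h := ((hasFDerivAt_inv' (𝕜 := ℝ) h0).comp z hd.hasFDerivAt).fderiv
  have he : (fun w => (d w)⁻¹) = (Inv.inv ∘ d) := rfl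
  simp only [wDzbar, he, h, ContinuousLinearMap.coe_comp', Function.comp_apply,
    ContinuousLinearMap.neg_apply, ContinuousLinearMap.mulLeftRight_apply]
  field_simp
  ring

lemma differentiableAt_wDzbar' {D : Set ℂ} (hD : IsOpen D) {g : ℂ → ℂ}
    (hg : ContDiffOn ℝ (⊤ : ℕ∞) g D) {z : ℂ} (hz : z ∈ D) :
    DifferentiableAt ℝ (wDzbar g) z := by
  have hfd : ContDiffOn ℝ (⊤ : ℕ∞) (fun x => fderiv ℝ g x) D := hg.fderiv_of_isOpen hD (by simp)
  have hda : DifferentiableAt ℝ (fun x => fderiv ℝ g x) z :=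
    (hfd.differentiableOn (by simp)).differentiableAt (hD.mem_nhds hz)
  have h1 : ∀ v : ℂ, DifferentiableAt ℝ (fun w => fderiv ℝ g w v) z := fun v =>
    hda.clm_apply (differentiableAt_const v)
  have hrfl : wDzbar g = fun w => (fderiv ℝ g w 1 + Complex.I * fderiv ℝ g w Complex.I) / 2 := rfl
  rw [hrfl]
  have h2 := (h1 Complex.I).const_mul Complex.I
  have h3 := (h1 1).add h2
  have h4 : (fun w => ((fderiv ℝ g w) 1 + Complex.I * (fderiv ℝ g w) Complex.I) / 2)
      = fun w => ((fderiv ℝ g w) 1 + Complex.I * (fderiv ℝ g w) Complex.I) * (2:ℂ)⁻¹ := by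
    funext w; rw [div_eq_mul_inv]
  rw [h4]
  exact h3.mul_const _

theorem stmt19 (D : Set ℂ) (hD : IsOpen D) (g : ℂ → ℂ)
    (hg : ContDiffOn ℝ (⊤ : ℕ∞) g D)
    (hne : ∀ z ∈ D, g z ^ 2 ≠ (conj (g z)) ^ 2)
    (hharm : ∀ z ∈ D,
      wDz (wDzbar g) z
        - (2 * g z / (g z ^ 2 - (conj (g z)) ^ 2)) * wDz g z * wDzbar g z = 0)
    (f : ℂ → ℂ)
    (hfdef : ∀ z, f z = 2 * conj (wDzbar g z) / (g z ^ 2 - (conj (g z)) ^ 2)) :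
    ∀ z ∈ D,
      -- the f-equation (f-eq) with μ₁ = 1, μ₂ = −1:
      wDzbar f z = (‖f z‖ : ℂ) ^ 2 * g z ∧
      -- the g-equation (g-eq) with μ₁ = 1, μ₂ = −1:
      wDzbar g z = -(1 / 2) * (g z ^ 2 - (conj (g z)) ^ 2) * conj (f z) := by
  intro z hz
  set dfun : ℂ → ℂ := fun w => g w ^ 2 - (conj (g w)) ^ 2 with hdfun_def
  have hd0 : dfun z ≠ 0 := sub_ne_zero.mpr (hne z hz)
  have hcd : conj (dfun z) = -(dfun z) := by
    simp only [hdfun_def, map_sub, map_pow, conj_conj]; ring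
  -- differentiability facts
  have Dg : DifferentiableAt ℝ g z :=
    (hg.differentiableOn (by simp)).differentiableAt (hD.mem_nhds hz)
  have Dcg : DifferentiableAt ℝ (fun w => conj (g w)) z := differentiableAt_conj_comp' Dg
  have hdfun_eq : dfun = fun w => g w * g w - (conj (g w)) * (conj (g w)) := by
    funext w; simp only [hdfun_def]; ring
  have Dd : DifferentiableAt ℝ dfun z := by
    rw [hdfun_eq]; exact (Dg.mul Dg).sub (Dcg.mul Dcg)
  have Dh : DifferentiableAt ℝ (wDzbar g) z := differentiableAt_wDzbar' hD hg hz
  have Dch : DifferentiableAt ℝ (fun w => conj (wDzbar g w)) z := differentiableAt_conj_comp' Dh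
  have DA : DifferentiableAt ℝ (fun w => 2 * conj (wDzbar g w)) z := Dch.const_mul 2
  have DB : DifferentiableAt ℝ (fun w => (dfun w)⁻¹) z := by
    have : (fun w => (dfun w)⁻¹) = (Inv.inv ∘ dfun) := rfl
    rw [this]
    exact (differentiableAt_inv (𝕜 := ℝ) hd0).comp z Dd
  -- derivative computations
  have C1 : wDzbar (fun w => conj (g w)) z = conj (wDz g z) := wDzbar_conj' Dg
  have C2 : wDzbar dfun z = 2 * g z * wDzbar g z - 2 * conj (g z) * conj (wDz g z) := by
    rw [hdfun_eq, wDzbar_sub' (F := fun w => g w * g w) (G := fun w => conj (g w) * conj (g w)) (Dg.mul Dg) (Dcg.mul Dcg), wDzbar_mul' Dg Dg,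
      wDzbar_mul' Dcg Dcg, C1]
    ring
  have C3 : wDz (wDzbar g) z = 2 * g z / dfun z * wDz g z * wDzbar g z :=
    sub_eq_zero.mp (hharm z hz)
  have C3' : conj (wDz (wDzbar g) z)
      = 2 * conj (g z) / (-(dfun z)) * conj (wDz g z) * conj (wDzbar g z) := by
    rw [C3]
    simp only [map_mul, map_div₀, map_ofNat, hcd, conj_conj]
  have C5 : wDzbar (fun w => (dfun w)⁻¹) z = -(wDzbar dfun z) / (dfun z) ^ 2 :=
    wDzbar_inv' Dd hd0
  have C7 : wDzbar (fun w => 2 * conj (wDzbar g w)) z = 2 * conj (wDz (wDzbar g) z) := by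
    rw [wDzbar_const_mul' 2 Dch, wDzbar_conj' Dh]
  have Cf : f = fun w => (2 * conj (wDzbar g w)) * (dfun w)⁻¹ := by
    funext w; rw [hfdef w, div_eq_mul_inv]
  have C6 : wDzbar f z
      = (2 * conj (wDzbar g z)) * (wDzbar (fun w => (dfun w)⁻¹) z)
        + (dfun z)⁻¹ * wDzbar (fun w => 2 * conj (wDzbar g w)) z := by
    rw [Cf]; exact wDzbar_mul' DA DB
  have hfzc : conj (f z) = 2 * wDzbar g z / (-(dfun z)) := by
    rw [hfdef z]
    simp only [map_div₀, map_mul, map_ofNat, conj_conj]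
    rw [show conj (g z ^ 2 - (conj (g z)) ^ 2) = -(dfun z) from hcd]
  -- g-equation
  have geq : wDzbar g z = -(1 / 2) * (g z ^ 2 - (conj (g z)) ^ 2) * conj (f z) := by
    rw [hfzc]
    have : (g z ^ 2 - (conj (g z)) ^ 2) = dfun z := rfl
    rw [this]
    field_simp
  refine ⟨?_, geq⟩
  -- f-equation
  have habs : ((‖f z‖ : ℝ) : ℂ) ^ 2 = f z * conj (f z) := by
    rw [Complex.mul_conj]
    norm_cast
    exact Complex.sq_norm _
  have hfz2 : f z = 2 * conj (wDzbar g z) * (dfun z)⁻¹ := by rw [Cf]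
  rw [C6, C5, C7, C3', C2, habs, hfzc, hfz2]
  field_simp
  ring
end
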